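/- Weak βΩ-reduction is Church–Rosser: for all λ-terms M, N₁, N₂, if M →*wβΩ N₁ and M →*wβΩ N₂, then there exists a term P with N₁ →*wβΩ P and N₂ →*wβΩ P. -/

import Mathlib

/-- Untyped λ-terms in de Bruijn representation. -/
inductive Lam : Type
  | var : ℕ → Lam
  | app : Lam → Lam → Lam
  | lam : Lam → Lam
deriving DecidableEq

namespace Lam

/-- Lift (shift) the free variables ≥ d by one. -/
def lift : ℕ → Lam → Lam
  | d, var n => if n < d then var n else var (n + 1)
  | d, app M N => app (lift d M) (lift d N)
  | d, lam M => lam (lift (d + 1) M)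

/-- Capture-avoiding substitution of N for the free variable k. -/
def subst : ℕ → Lam → Lam → Lam
  | k, N, var n => if n = k then N else if k < n then var (n - 1) else var n
  | k, N, app A B => app (subst k N A) (subst k N B)
  | k, N, lam M => lam (subst (k + 1) (lift 0 N) M)

/-- All free variables are < k. -/
def ClosedUnder : ℕ → Lam → Prop
  | k, var n => n < k
  | k, app A B => ClosedUnder k A ∧ ClosedUnder k B
  | k, lam M => ClosedUnder (k + 1) M

/-- A term is closed if it has no free variables. -/
def Closed (M : Lam) : Prop := ClosedUnder 0 M

/-- x occurs free in the term. -/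
def FreeIn : ℕ → Lam → Prop
  | x, var n => n = x
  | x, app A B => FreeIn x A ∨ FreeIn x B
  | x, lam M => FreeIn (x + 1) M

/-- The minimal number of abstractions needed to close the term. -/
def fvBound : Lam → ℕ
  | var n => n + 1
  | app A B => max (fvBound A) (fvBound B)
  | lam M => fvBound M - 1

/-- Iterated abstraction λz₁…zₙ.M. -/
def absN : ℕ → Lam → Lam
  | 0, M => M
  | n + 1, M => lam (absN n M)

/-- The λ-closure of a term: abstraction over all its free variables. -/
def close (M : Lam) : Lam := absN (fvBound M) M

/-- One-step β-reduction (closed under arbitrary contexts). -/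
inductive Beta : Lam → Lam → Prop
  | beta (U V) : Beta (app (lam U) V) (subst 0 V U)
  | appL {M M'} (N) : Beta M M' → Beta (app M N) (app M' N)
  | appR (M) {N N'} : Beta N N' → Beta (app M N) (app M N')
  | lam {M M'} : Beta M M' → Beta (lam M) (lam M')

/-- Many-step β-reduction. -/
def BetaStar : Lam → Lam → Prop := Relation.ReflTransGen Beta

/-- β-conversion. -/
def BetaConv : Lam → Lam → Prop := Relation.EqvGen Beta

def iComb : Lam := lam (var 0)
def omegaComb : Lam := lam (app (var 0) (var 0))
def Omega : Lam := app omegaComb omegaComb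
def Kstar : Lam := lam (lam (var 0))

/-- Apply a term to a list of arguments: M N₁ ⋯ Nₖ. -/
def appList : Lam → List Lam → Lam
  | M, [] => M
  | M, N :: Ns => appList (app M N) Ns

/-- A term is solvable iff its λ-closure applied to some closed terms β-converts to I. -/
def Solvable (M : Lam) : Prop :=
  ∃ Ns : List Lam, (∀ N ∈ Ns, Closed N) ∧ BetaConv (appList (close M) Ns) iComb

/-- One-step weak βΩ-reduction. -/
inductive WBO : Lam → Lam → Prop
  | wbeta (U V) : Closed (app (lam U) V) → WBO (app (lam U) V) (subst 0 V U)
  | womega (M) : Closed M → ¬ Solvable M → M ≠ Omega → WBO M Omega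
  | appL {M M'} (N) : WBO M M' → WBO (app M N) (app M' N)
  | appR (M) {N N'} : WBO N N' → WBO (app M N) (app M N')
  | lam {M M'} : WBO M M' → WBO (lam M) (lam M')

/-- Many-step weak βΩ-reduction. -/
def WBOStar : Lam → Lam → Prop := Relation.ReflTransGen WBO

/-- Weak βΩ-conversion. -/
def WBOConv : Lam → Lam → Prop := Relation.EqvGen WBO

/-- One-step full βΩ-reduction (Ω-contraction allowed on open terms,
unsolvability referring to the λ-closure). -/
inductive BO : Lam → Lam → Prop
  | beta (U V) : BO (app (lam U) V) (subst 0 V U)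
  | omega (M) : ¬ Solvable M → M ≠ Omega → BO M Omega
  | appL {M M'} (N) : BO M M' → BO (app M N) (app M' N)
  | appR (M) {N N'} : BO N N' → BO (app M N) (app M N')
  | lam {M M'} : BO M M' → BO (lam M) (lam M')

/-- Many-step full βΩ-reduction. -/
def BOStar : Lam → Lam → Prop := Relation.ReflTransGen BO

/-- Full βΩ-conversion. -/
def BOConv : Lam → Lam → Prop := Relation.EqvGen BO

/-- A term is in βΩ-normal form iff it admits no βΩ-reduction, i.e. it contains
no β-redex and no unsolvable subterm other than Ω. -/
def BONormal (M : Lam) : Prop := ∀ N, ¬ BO M N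

/-- Head weak β-reduction: contraction of the head redex
λx₁…xₙ.(λx.U)V M₁⋯Mₖ → λx₁…xₙ.([V/x]U)M₁⋯Mₖ with (λx.U)V closed. -/
inductive HeadWBeta : Lam → Lam → Prop
  | head (U V) : Closed (app (lam U) V) → HeadWBeta (app (lam U) V) (subst 0 V U)
  | app {M M'} (N) : (∀ U, M ≠ lam U) → HeadWBeta M M' → HeadWBeta (app M N) (app M' N)
  | lam {M M'} : HeadWBeta M M' → HeadWBeta (lam M) (lam M')

/-- The head variable of the term is the free variable x,
i.e. the term has the form λy₁…yᵣ. x X₁ ⋯ Xₘ. -/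
inductive HeadVar : ℕ → Lam → Prop
  | var (x) : HeadVar x (var x)
  | app {x M} (N) : (∀ U, M ≠ lam U) → HeadVar x M → HeadVar x (app M N)
  | lam {x M} : HeadVar (x + 1) M → HeadVar x (lam M)

/-- Subterm relation. -/
inductive Subterm : Lam → Lam → Prop
  | refl (M) : Subterm M M
  | appL {S M} (N) : Subterm S M → Subterm S (app M N)
  | appR (M) {S N} : Subterm S N → Subterm S (app M N)
  | lam {S M} : Subterm S M → Subterm S (lam M)

/-- A closed term is in weak βΩ head normal form iff it is unsolvable and equal
to Ω, or solvable and without a head weak β-redex. -/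
def WHnf (M : Lam) : Prop :=
  (¬ Solvable M ∧ M = Omega) ∨ (Solvable M ∧ ∀ N, ¬ HeadWBeta M N)

/-- Equality in the theory Hω. -/
inductive HOmega : Lam → Lam → Prop
  | refl (M) : Closed M → HOmega M M
  | wbetaL (U N) : Closed (app (lam U) N) → HOmega (app (lam U) N) (subst 0 N U)
  | wbetaR (U N) : Closed (app (lam U) N) → HOmega (subst 0 N U) (app (lam U) N)
  | unsolvL (M) : Closed M → ¬ Solvable M → HOmega M Omega
  | unsolvR (M) : Closed M → ¬ Solvable M → HOmega Omega M
  | leibnitz (X Y M N) : ClosedUnder 1 X → ClosedUnder 1 Y → Closed M → Closed N →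
      HOmega (subst 0 M X) (subst 0 M Y) → HOmega M N →
      HOmega (subst 0 N X) (subst 0 N Y)
  | omega_rule (P Q) : Closed P → Closed Q →
      (∀ M, Closed M → HOmega (app P M) (app Q M)) → HOmega P Q

/-- The n-fold application fⁿ z in the Church numeral. -/
def churchBody : ℕ → Lam
  | 0 => var 0
  | n + 1 => app (var 1) (churchBody n)

/-- The n-th Church numeral. -/
def church (n : ℕ) : Lam := lam (lam (churchBody n))

/-! ### Auxiliary development -/

theorem cu_mono : ∀ (M : Lam) {k k' : ℕ}, k ≤ k' → ClosedUnder k M → ClosedUnder k' M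
  | var n, k, k', h, hc => by
      simp only [ClosedUnder] at hc ⊢; omega
  | app A B, k, k', h, hc => by
      simp only [ClosedUnder] at hc ⊢
      exact ⟨cu_mono A h hc.1, cu_mono B h hc.2⟩
  | lam M, k, k', h, hc => by
      simp only [ClosedUnder] at hc ⊢
      exact cu_mono M (by omega) hc

theorem lift_cu : ∀ (M : Lam) (k d : ℕ), d ≤ k → ClosedUnder k M → ClosedUnder (k + 1) (lift d M)
  | var n, k, d, hd, hc => by
      simp only [ClosedUnder] at hc
      simp only [lift]; split <;> (simp only [ClosedUnder]; omega)
  | app A B, k, d, hd, hc => by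
      simp only [ClosedUnder] at hc ⊢
      exact ⟨lift_cu A k d hd hc.1, lift_cu B k d hd hc.2⟩
  | lam M, k, d, hd, hc => by
      simp only [ClosedUnder, lift] at hc ⊢
      exact lift_cu M (k+1) (d+1) (by omega) hc

theorem subst_cu : ∀ (M : Lam) (k j : ℕ) (N : Lam), j ≤ k → ClosedUnder (k + 1) M →
    ClosedUnder k N → ClosedUnder k (subst j N M)
  | var n, k, j, N, hj, hc, hN => by
      simp only [ClosedUnder] at hc
      simp only [subst]
      split
      · exact hN
      · split <;> (simp only [ClosedUnder]; omega)
  | app A B, k, j, N, hj, hc, hN => by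
      simp only [ClosedUnder] at hc ⊢
      exact ⟨subst_cu A k j N hj hc.1 hN, subst_cu B k j N hj hc.2 hN⟩
  | lam M, k, j, N, hj, hc, hN => by
      simp only [ClosedUnder, subst] at hc ⊢
      exact subst_cu M (k+1) (j+1) (lift 0 N) (by omega) hc (lift_cu N k 0 (by omega) hN)

theorem lift_closed_eq : ∀ (M : Lam) (d : ℕ), ClosedUnder d M → lift d M = M
  | var n, d, hc => by
      simp only [ClosedUnder] at hc; simp [lift, hc]
  | app A B, d, hc => by
      simp only [ClosedUnder] at hc
      simp [lift, lift_closed_eq A d hc.1, lift_closed_eq B d hc.2]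
  | lam M, d, hc => by
      simp only [ClosedUnder] at hc
      simp [lift, lift_closed_eq M (d+1) hc]

theorem subst_closed_eq : ∀ (M : Lam) (k : ℕ) (N : Lam), ClosedUnder k M → subst k N M = M
  | var n, k, N, hc => by
      simp only [ClosedUnder] at hc
      simp only [subst]
      rw [if_neg (by omega), if_neg (by omega)]
  | app A B, k, N, hc => by
      simp only [ClosedUnder] at hc
      simp [subst, subst_closed_eq A k N hc.1, subst_closed_eq B k N hc.2]
  | lam M, k, N, hc => by
      simp only [ClosedUnder] at hc
      simp [subst, subst_closed_eq M (k+1) (lift 0 N) hc]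

theorem cu_fvBound : ∀ (M : Lam), ClosedUnder (fvBound M) M
  | var n => by simp [ClosedUnder, fvBound]
  | app A B => by
      simp only [ClosedUnder, fvBound]
      exact ⟨cu_mono A (le_max_left _ _) (cu_fvBound A),
             cu_mono B (le_max_right _ _) (cu_fvBound B)⟩
  | lam M => by
      simp only [ClosedUnder, fvBound]
      exact cu_mono M (by omega) (cu_fvBound M)

theorem fvBound_le : ∀ (M : Lam) (k : ℕ), ClosedUnder k M → fvBound M ≤ k
  | var n, k, hc => by simp only [ClosedUnder] at hc; simp [fvBound]; omega
  | app A B, k, hc => by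
      simp only [ClosedUnder] at hc
      simp only [fvBound]
      exact max_le (fvBound_le A k hc.1) (fvBound_le B k hc.2)
  | lam M, k, hc => by
      simp only [ClosedUnder] at hc
      simp only [fvBound]
      have := fvBound_le M (k+1) hc
      omega

theorem closed_fvBound_zero {M : Lam} (h : Closed M) : fvBound M = 0 :=
  Nat.le_zero.mp (fvBound_le M 0 h)

theorem omega_closed : Closed Omega := by
  simp [Closed, Omega, omegaComb, ClosedUnder]

theorem omega_fvBound : fvBound Omega = 0 := by decide

theorem close_eq_self {M : Lam} (h : Closed M) : close M = M := by
  simp [close, closed_fvBound_zero h, absN]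

theorem absN_cu : ∀ (m : ℕ) (M : Lam) (k : ℕ), ClosedUnder (k + m) M → ClosedUnder k (absN m M)
  | 0, M, k, h => h
  | m+1, M, k, h => by
      simp only [absN, ClosedUnder]
      exact absN_cu m M (k+1) (by have := h; rw [show k+1+m = k+(m+1) by omega]; exact this)

theorem absN_add (m j : ℕ) (M : Lam) : absN m (absN j M) = absN (m + j) M := by
  induction m with
  | zero => simp [absN]
  | succ m ih => rw [show m+1+j = (m+j)+1 by omega]; simp [absN, ih]
/-! ### de Bruijn commutation lemmas -/

theorem lift_lift : ∀ (M : Lam) (d e : ℕ), d ≤ e →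
    lift d (lift e M) = lift (e + 1) (lift d M)
  | var n, d, e, h => by
      simp only [lift]
      split_ifs <;> simp only [lift] <;> (try split_ifs) <;>
        first | rfl | omega | (simp only [var.injEq]; omega)
  | app A B, d, e, h => by simp [lift, lift_lift A d e h, lift_lift B d e h]
  | lam M, d, e, h => by simp [lift, lift_lift M (d+1) (e+1) (by omega)]

theorem subst_lift_cancel : ∀ (M : Lam) (j : ℕ) (X : Lam), subst j X (lift j M) = M
  | var n, j, X => by
      simp only [lift, subst]
      split_ifs <;> simp only [lift, subst] <;> (try split_ifs) <;>
        first | rfl | omega | (simp only [var.injEq]; omega)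
  | app A B, j, X => by simp [lift, subst, subst_lift_cancel A j X, subst_lift_cancel B j X]
  | lam M, j, X => by simp [lift, subst, subst_lift_cancel M (j+1) (lift 0 X)]

theorem lift_subst : ∀ (M : Lam) (k d : ℕ) (N : Lam), d ≤ k →
    lift d (subst k N M) = subst (k + 1) (lift d N) (lift d M)
  | var n, k, d, N, h => by
      simp only [lift, subst]
      split_ifs <;> simp only [lift, subst] <;> (try split_ifs) <;>
        (try simp only [lift, subst]) <;>
        first | rfl | omega | (simp only [var.injEq]; omega)
  | app A B, k, d, N, h => by simp [lift, subst, lift_subst A k d N h, lift_subst B k d N h]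
  | lam M, k, d, N, h => by
      simp only [lift, subst, lift_subst M (k+1) (d+1) (lift 0 N) (by omega)]
      rw [lift_lift N 0 d (by omega)]

theorem lift_subst' : ∀ (M : Lam) (k d : ℕ) (N : Lam), k ≤ d →
    lift d (subst k N M) = subst k (lift d N) (lift (d + 1) M)
  | var n, k, d, N, h => by
      simp only [lift, subst]
      split_ifs <;> simp only [lift, subst] <;> (try split_ifs) <;>
        (try simp only [lift, subst]) <;>
        first | rfl | omega | (simp only [var.injEq]; omega)
  | app A B, k, d, N, h => by simp [lift, subst, lift_subst' A k d N h, lift_subst' B k d N h]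
  | lam M, k, d, N, h => by
      simp only [lift, subst, lift_subst' M (k+1) (d+1) (lift 0 N) (by omega)]
      rw [lift_lift N 0 d (by omega)]

theorem subst_subst : ∀ (M : Lam) (j k : ℕ) (V N : Lam), j ≤ k →
    subst k N (subst j V M) = subst j (subst k N V) (subst (k + 1) (lift j N) M)
  | var n, j, k, V, N, h => by
      simp only [lift, subst]
      split_ifs <;> simp only [lift, subst, subst_lift_cancel] <;> (try split_ifs) <;>
        (try simp only [lift, subst, subst_lift_cancel]) <;>
        first | rfl | omega | (simp only [var.injEq]; omega)
  | app A B, j, k, V, N, h => by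
      simp [subst, subst_subst A j k V N h, subst_subst B j k V N h]
  | lam M, j, k, V, N, h => by
      simp only [subst, subst_subst M (j+1) (k+1) (lift 0 V) (lift 0 N) (by omega)]
      rw [lift_subst V k 0 N (by omega), lift_lift N 0 j (by omega)]
/-! ### Parallel β-reduction and Church–Rosser for β -/

inductive PB : Lam → Lam → Prop
  | var (n) : PB (var n) (var n)
  | app {M M' N N'} : PB M M' → PB N N' → PB (app M N) (app M' N')
  | lam {M M'} : PB M M' → PB (lam M) (lam M')
  | beta {U U' V V'} : PB U U' → PB V V' → PB (app (lam U) V) (subst 0 V' U')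

theorem pb_refl : ∀ (M : Lam), PB M M
  | var n => PB.var n
  | app A B => PB.app (pb_refl A) (pb_refl B)
  | lam M => PB.lam (pb_refl M)

theorem pb_lift {M M' : Lam} (h : PB M M') : ∀ (d : ℕ), PB (lift d M) (lift d M') := by
  induction h with
  | var n => intro d; simp only [Lam.lift]; split <;> exact pb_refl _
  | app hA hB ihA ihB => intro d; exact PB.app (ihA d) (ihB d)
  | lam hM ihM => intro d; exact PB.lam (ihM (d+1))
  | @beta U U' V V' hU hV ihU ihV =>
      intro d
      have : Lam.lift d (subst 0 V' U') = subst 0 (Lam.lift d V') (Lam.lift (d+1) U') :=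
        lift_subst' U' 0 d V' (by omega)
      rw [this]
      exact PB.beta (ihU (d+1)) (ihV d)

theorem pb_sub {M M' : Lam} (h : PB M M') :
    ∀ (k : ℕ) {N N' : Lam}, PB N N' → PB (subst k N M) (subst k N' M') := by
  induction h with
  | var n =>
      intro k N N' hN
      simp only [Lam.subst]
      split
      · exact hN
      · split <;> exact pb_refl _
  | app hA hB ihA ihB => intro k N N' hN; exact PB.app (ihA k hN) (ihB k hN)
  | lam hM ihM =>
      intro k N N' hN
      exact PB.lam (ihM (k+1) (pb_lift hN 0))
  | @beta U U' V V' hU hV ihU ihV =>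
      intro k N N' hN
      have : Lam.subst k N' (Lam.subst 0 V' U')
          = Lam.subst 0 (Lam.subst k N' V') (Lam.subst (k+1) (Lam.lift 0 N') U') :=
        subst_subst U' 0 k V' N' (by omega)
      simp only [Lam.subst]
      rw [this]
      exact PB.beta (ihU (k+1) (pb_lift hN 0)) (ihV k hN)

/-- Complete development. -/
def cd : Lam → Lam
  | var n => var n
  | lam M => lam (cd M)
  | app (lam U) V => subst 0 (cd V) (cd U)
  | app (var n) V => app (var n) (cd V)
  | app (app A B) V => app (cd (app A B)) (cd V)

theorem pb_lam_inv {U Y : Lam} (h : PB (lam U) Y) : ∃ U', Y = lam U' ∧ PB U U' := by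
  cases h with
  | lam hU => exact ⟨_, rfl, hU⟩

theorem pb_cd : ∀ {M N : Lam}, PB M N → PB N (cd M) := by
  intro M N h
  induction h with
  | var n => exact PB.var n
  | @app M M' N N' hA hB ihA ihB =>
      cases M with
      | var n =>
          cases hA with
          | var => exact PB.app (PB.var n) ihB
      | lam U =>
          obtain ⟨U', rfl, hU⟩ := pb_lam_inv hA
          have ihU : PB U' (cd U) := by
            cases ihA with
            | lam h => exact h
          exact PB.beta ihU ihB
      | app A B =>
          exact PB.app ihA ihB
  | lam hM ihM => exact PB.lam ihM
  | @beta U U' V V' hU hV ihU ihV =>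
      show PB _ (cd (app (lam U) V))
      exact pb_sub ihU 0 ihV

theorem pb_diamond {M N₁ N₂ : Lam} (h₁ : PB M N₁) (h₂ : PB M N₂) :
    ∃ P, PB N₁ P ∧ PB N₂ P :=
  ⟨cd M, pb_cd h₁, pb_cd h₂⟩

theorem beta_pb {M N : Lam} (h : Beta M N) : PB M N := by
  induction h with
  | beta U V => exact PB.beta (pb_refl U) (pb_refl V)
  | appL N h ih => exact PB.app ih (pb_refl N)
  | appR M h ih => exact PB.app (pb_refl M) ih
  | lam h ih => exact PB.lam ih

theorem bstar_appL {M M' : Lam} (N : Lam) (h : BetaStar M M') :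
    BetaStar (app M N) (app M' N) :=
  Relation.ReflTransGen.lift (fun X => app X N) (fun _ _ hh => Beta.appL N hh) _ _ h

theorem bstar_appR (M : Lam) {N N' : Lam} (h : BetaStar N N') :
    BetaStar (app M N) (app M N') :=
  Relation.ReflTransGen.lift (fun X => app M X) (fun _ _ hh => Beta.appR M hh) _ _ h

theorem bstar_lam {M M' : Lam} (h : BetaStar M M') : BetaStar (lam M) (lam M') :=
  Relation.ReflTransGen.lift (fun X => lam X) (fun _ _ hh => Beta.lam hh) _ _ h

theorem pb_bstar {M N : Lam} (h : PB M N) : BetaStar M N := by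
  induction h with
  | var n => exact Relation.ReflTransGen.refl
  | @app M M' N N' hA hB ihA ihB =>
      exact Relation.ReflTransGen.trans (bstar_appL N ihA) (bstar_appR M' ihB)
  | lam hM ihM => exact bstar_lam ihM
  | @beta U U' V V' hU hV ihU ihV =>
      refine Relation.ReflTransGen.tail ?_ (Beta.beta U' V')
      exact Relation.ReflTransGen.trans (bstar_appL V (bstar_lam ihU)) (bstar_appR (lam U') ihV)

theorem beta_cr {M N₁ N₂ : Lam} (h₁ : BetaStar M N₁) (h₂ : BetaStar M N₂) :
    ∃ P, BetaStar N₁ P ∧ BetaStar N₂ P := by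
  have hpb₁ : Relation.ReflTransGen PB M N₁ := Relation.ReflTransGen.mono (fun _ _ => beta_pb) _ _ h₁
  have hpb₂ : Relation.ReflTransGen PB M N₂ := Relation.ReflTransGen.mono (fun _ _ => beta_pb) _ _ h₂
  have := Relation.church_rosser
    (fun a b c hab hac => by
      obtain ⟨d, hbd, hcd⟩ := pb_diamond hab hac
      exact ⟨d, Relation.ReflGen.single hbd, Relation.ReflTransGen.single hcd⟩)
    hpb₁ hpb₂
  obtain ⟨P, hP₁, hP₂⟩ := this
  refine ⟨P, ?_, ?_⟩
  · exact Relation.ReflTransGen.trans_induction_on hP₁ (fun _ => .refl)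
      (fun h => pb_bstar h) (fun _ _ ih1 ih2 => ih1.trans ih2)
  · exact Relation.ReflTransGen.trans_induction_on hP₂ (fun _ => .refl)
      (fun h => pb_bstar h) (fun _ _ ih1 ih2 => ih1.trans ih2)

theorem bconv_join {M N : Lam} (h : BetaConv M N) : ∃ P, BetaStar M P ∧ BetaStar N P := by
  induction h with
  | rel a b hab => exact ⟨b, Relation.ReflTransGen.single hab, Relation.ReflTransGen.refl⟩
  | refl a => exact ⟨a, Relation.ReflTransGen.refl, Relation.ReflTransGen.refl⟩
  | symm a b hab ih => obtain ⟨P, h1, h2⟩ := ih; exact ⟨P, h2, h1⟩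
  | trans a b c hab hbc ih1 ih2 =>
      obtain ⟨P, hP1, hP2⟩ := ih1
      obtain ⟨Q, hQ1, hQ2⟩ := ih2
      obtain ⟨R, hR1, hR2⟩ := beta_cr hP2 hQ1
      exact ⟨R, hP1.trans hR1, hQ2.trans hR2⟩

theorem icomb_nf {N : Lam} (h : Beta iComb N) : False := by
  cases h with
  | lam h => cases h

theorem bstar_icomb {N : Lam} (h : BetaStar iComb N) : N = iComb := by
  induction h with
  | refl => rfl
  | tail h1 h2 ih => subst ih; exact absurd h2 icomb_nf

theorem bconv_icomb_bstar {M : Lam} (h : BetaConv M iComb) : BetaStar M iComb := by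
  obtain ⟨P, h1, h2⟩ := bconv_join h
  rwa [bstar_icomb h2] at h1

theorem bstar_bconv {M N : Lam} (h : BetaStar M N) : BetaConv M N :=
  Relation.ReflTransGen.trans_induction_on h (fun a => Relation.EqvGen.refl a)
    (fun h => Relation.EqvGen.rel _ _ h) (fun _ _ ih1 ih2 => ih1.trans _ _ _ ih2)
/-! ### Solvability machinery -/

theorem appList_app (M N : Lam) (Ns : List Lam) :
    appList (app M N) Ns = appList M (N :: Ns) := rfl

/-- Ω-spine terms. -/
inductive OSpine : Lam → Prop
  | base : OSpine Omega
  | app {M} (N) : OSpine M → OSpine (app M N)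

theorem omegaComb_nf {N : Lam} (h : Beta omegaComb N) : False := by
  cases h with
  | lam h =>
    cases h with
    | appL _ h => cases h
    | appR _ h => cases h

theorem omega_reduct {N : Lam} (h : Beta Omega N) : N = Omega := by
  cases h with
  | beta U V => rfl
  | appL _ h => exact absurd h omegaComb_nf
  | appR _ h => exact absurd h omegaComb_nf

theorem ospine_not_lam {M : Lam} (h : OSpine M) : ∀ U, M ≠ lam U := by
  cases h <;> intro U <;> simp [Omega]

theorem ospine_step {M N : Lam} (hs : OSpine M) (h : Beta M N) : OSpine N := by
  induction h with
  | beta U V => cases hs with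
    | base => exact OSpine.base
    | app N h => exact absurd rfl (ospine_not_lam h U)
  | appL N h ih => cases hs with
    | base => rw [show app _ _ = Omega from omega_reduct (Beta.appL _ h)]; exact OSpine.base
    | app _ hM => exact OSpine.app _ (ih hM)
  | appR M h ih => cases hs with
    | base => exact absurd h omegaComb_nf
    | app _ hM => exact OSpine.app _ hM
  | lam h ih => cases hs

theorem ospine_star {M N : Lam} (hs : OSpine M) (h : BetaStar M N) : OSpine N := by
  induction h with
  | refl => exact hs
  | tail h1 h2 ih => exact ospine_step ih h2

theorem ospine_appList (Ns : List Lam) : ∀ {M : Lam}, OSpine M → OSpine (appList M Ns) := by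
  induction Ns with
  | nil => intro M h; exact h
  | cons N Ns ih => intro M h; exact ih (OSpine.app N h)

theorem omega_unsolvable : ¬ Solvable Omega := by
  rintro ⟨Ns, hNs, hconv⟩
  rw [close_eq_self omega_closed] at hconv
  have h1 : BetaStar (appList Omega Ns) iComb := bconv_icomb_bstar hconv
  have h2 : OSpine (appList Omega Ns) := ospine_appList Ns OSpine.base
  have h3 := ospine_star h2 h1
  exact ospine_not_lam h3 (var 0) rfl

/-- Auxiliary solvability of an (intended closed) term. -/
def SolvAux (P : Lam) : Prop :=
  ∃ Ns : List Lam, (∀ N ∈ Ns, Closed N) ∧ BetaConv (appList P Ns) iComb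

theorem solvable_iff_solvAux (M : Lam) : Solvable M ↔ SolvAux (close M) := Iff.rfl

theorem beta_appList {P P' : Lam} (h : Beta P P') (Ns : List Lam) :
    Beta (appList P Ns) (appList P' Ns) := by
  induction Ns generalizing P P' with
  | nil => exact h
  | cons N Ns ih => exact ih (Beta.appL N h)

theorem beta_absN {P P' : Lam} (h : Beta P P') (m : ℕ) :
    Beta (absN m P) (absN m P') := by
  induction m with
  | zero => exact h
  | succ m ih => exact Beta.lam ih

theorem icomb_closed : Closed iComb := by simp [Closed, iComb, ClosedUnder]

theorem solvAux_beta {P P' : Lam} (h : Beta P P') (hs : SolvAux P') : SolvAux P := by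
  obtain ⟨Ns, hNs, hconv⟩ := hs
  exact ⟨Ns, hNs, Relation.EqvGen.trans _ _ _
    (Relation.EqvGen.rel _ _ (beta_appList h Ns)) hconv⟩

theorem solvAux_lam {P : Lam} (hc : Closed P) (hs : SolvAux P) : SolvAux (lam P) := by
  obtain ⟨Ns, hNs, hconv⟩ := hs
  refine ⟨iComb :: Ns, ?_, ?_⟩
  · intro N hN
    rcases hN with _ | hN
    · exact icomb_closed
    · exact hNs N (by assumption)
  · have hstep : Beta (app (lam P) iComb) P := by
      have := Beta.beta P iComb
      rwa [subst_closed_eq P 0 iComb hc] at this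
    rw [← appList_app]
    exact Relation.EqvGen.trans _ _ _
      (Relation.EqvGen.rel _ _ (beta_appList hstep Ns)) hconv

theorem solvAux_absN {P : Lam} (m : ℕ) (hc : Closed P) (hs : SolvAux P) :
    SolvAux (absN m P) := by
  induction m with
  | zero => exact hs
  | succ m ih =>
      show SolvAux (lam (absN m P))
      exact solvAux_lam (absN_cu m P 0 (cu_mono P (by omega) hc)) ih

theorem beta_cu {M N : Lam} (h : Beta M N) : ∀ k, ClosedUnder k M → ClosedUnder k N := by
  induction h with
  | beta U V =>
      intro k hc
      simp only [ClosedUnder] at hc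
      exact subst_cu U k 0 V (by omega) hc.1 hc.2
  | appL N h ih =>
      intro k hc
      simp only [ClosedUnder] at hc ⊢
      exact ⟨ih k hc.1, hc.2⟩
  | appR M h ih =>
      intro k hc
      simp only [ClosedUnder] at hc ⊢
      exact ⟨hc.1, ih k hc.2⟩
  | lam h ih =>
      intro k hc
      simp only [ClosedUnder] at hc ⊢
      exact ih (k+1) hc

/-- Solvability pulls back along a β-step. -/
theorem beta_solv_back {M N : Lam} (h : Beta M N) (hs : Solvable N) : Solvable M := by
  have hj : fvBound N ≤ fvBound M :=
    fvBound_le N (fvBound M) (beta_cu h (fvBound M) (cu_fvBound M))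
  rw [solvable_iff_solvAux] at hs ⊢
  unfold close at hs ⊢
  have h1 : SolvAux (absN (fvBound M - fvBound N) (absN (fvBound N) N)) :=
    solvAux_absN _ (absN_cu _ N 0 (by simpa using cu_fvBound N)) hs
  rw [absN_add, Nat.sub_add_cancel hj] at h1
  exact solvAux_beta (beta_absN h (fvBound M)) h1
/-! ### Replacement of Ω by a closed term, and simulation -/

/-- `Rep Q A B` : `B` is obtained from `A` by replacing some occurrences of `Ω` by `Q`. -/
inductive Rep (Q : Lam) : Lam → Lam → Prop
  | var (n) : Rep Q (var n) (var n)
  | app {A A' B B'} : Rep Q A A' → Rep Q B B' → Rep Q (app A B) (app A' B')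
  | lam {A A'} : Rep Q A A' → Rep Q (lam A) (lam A')
  | omega : Rep Q Omega Q

theorem rep_refl (Q : Lam) : ∀ (M : Lam), Rep Q M M
  | var n => Rep.var n
  | app A B => Rep.app (rep_refl Q A) (rep_refl Q B)
  | lam M => Rep.lam (rep_refl Q M)

theorem rep_lift {Q : Lam} (hQ : Closed Q) {A A' : Lam} (h : Rep Q A A') (d : ℕ) :
    Rep Q (lift d A) (lift d A') := by
  induction h generalizing d with
  | var n => simp only [lift]; split <;> exact rep_refl Q _
  | app hA hB ihA ihB => exact Rep.app (ihA d) (ihB d)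
  | lam hA ihA => exact Rep.lam (ihA (d+1))
  | omega =>
      rw [lift_closed_eq Omega d (cu_mono Omega (by omega) omega_closed),
          lift_closed_eq Q d (cu_mono Q (by omega) hQ)]
      exact Rep.omega

theorem rep_subst {Q : Lam} (hQ : Closed Q) {A A' : Lam} (h : Rep Q A A') :
    ∀ (k : ℕ) {V V' : Lam}, Rep Q V V' → Rep Q (subst k V A) (subst k V' A') := by
  induction h with
  | var n =>
      intro k V V' hV
      simp only [subst]
      split
      · exact hV
      · split <;> exact rep_refl Q _
  | app hA hB ihA ihB => intro k V V' hV; exact Rep.app (ihA k hV) (ihB k hV)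
  | lam hA ihA => intro k V V' hV; exact Rep.lam (ihA (k+1) (rep_lift hQ hV 0))
  | omega =>
      intro k V V' hV
      rw [subst_closed_eq Omega k V (cu_mono Omega (by omega) omega_closed),
          subst_closed_eq Q k V' (cu_mono Q (by omega) hQ)]
      exact Rep.omega

theorem rep_sim {Q : Lam} (hQ : Closed Q) {A B : Lam} (h : Beta A B) :
    ∀ {A' : Lam}, Rep Q A A' → ∃ B', BetaStar A' B' ∧ Rep Q B B' := by
  induction h with
  | beta U V =>
      intro A' hr
      cases hr with
      | app hL hR =>
          cases hL with
          | lam hU => exact ⟨_, Relation.ReflTransGen.single (Beta.beta _ _),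
              rep_subst hQ hU 0 hR⟩
      | omega =>
          have heq : subst 0 omegaComb (app (var 0) (var 0)) = Omega :=
            omega_reduct (Beta.beta _ _)
          rw [heq]
          exact ⟨Q, Relation.ReflTransGen.refl, Rep.omega⟩
  | @appL M M' N h ih =>
      intro A' hr
      cases hr with
      | app hL hR =>
          obtain ⟨B', h1, h2⟩ := ih hL
          exact ⟨app B' _, bstar_appL _ h1, Rep.app h2 hR⟩
      | omega => exact absurd h omegaComb_nf
  | @appR M N N' h ih =>
      intro A' hr
      cases hr with
      | app hL hR =>
          obtain ⟨B', h1, h2⟩ := ih hR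
          exact ⟨app _ B', bstar_appR _ h1, Rep.app hL h2⟩
      | omega => exact absurd h omegaComb_nf
  | lam h ih =>
      intro A' hr
      cases hr with
      | lam hA =>
          obtain ⟨B', h1, h2⟩ := ih hA
          exact ⟨lam B', bstar_lam h1, Rep.lam h2⟩

theorem rep_sim_star {Q : Lam} (hQ : Closed Q) {A B : Lam} (h : BetaStar A B) :
    ∀ {A' : Lam}, Rep Q A A' → ∃ B', BetaStar A' B' ∧ Rep Q B B' := by
  induction h with
  | refl => intro A' hr; exact ⟨A', Relation.ReflTransGen.refl, hr⟩
  | tail h1 h2 ih =>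
      intro A' hr
      obtain ⟨B', hb1, hb2⟩ := ih hr
      obtain ⟨C', hc1, hc2⟩ := rep_sim hQ h2 hb2
      exact ⟨C', hb1.trans hc1, hc2⟩

theorem rep_icomb {Q : Lam} {B : Lam} (h : Rep Q iComb B) : B = iComb := by
  cases h with
  | lam hA => cases hA with
    | var => rfl

theorem rep_fvBound {Q : Lam} (hQ : Closed Q) {A A' : Lam} (h : Rep Q A A') :
    fvBound A' = fvBound A := by
  induction h with
  | var n => rfl
  | app hA hB ihA ihB => simp [fvBound, ihA, ihB]
  | lam hA ihA => simp [fvBound, ihA]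
  | omega => rw [closed_fvBound_zero hQ, omega_fvBound]

theorem rep_absN {Q : Lam} {A A' : Lam} (h : Rep Q A A') (m : ℕ) :
    Rep Q (absN m A) (absN m A') := by
  induction m with
  | zero => exact h
  | succ m ih => exact Rep.lam ih

theorem rep_appList {Q : Lam} {A A' : Lam} (h : Rep Q A A') (Ns : List Lam) :
    Rep Q (appList A Ns) (appList A' Ns) := by
  induction Ns generalizing A A' with
  | nil => exact h
  | cons N Ns ih => exact ih (Rep.app h (rep_refl Q N))

/-- Solvability pulls back along replacing Ω by any closed term. -/
theorem rep_solv_back {Q : Lam} (hQ : Closed Q) {A A' : Lam} (h : Rep Q A A')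
    (hs : Solvable A) : Solvable A' := by
  obtain ⟨Ns, hNs, hconv⟩ := hs
  have hst : BetaStar (appList (close A) Ns) iComb := bconv_icomb_bstar hconv
  have hrep : Rep Q (appList (close A) Ns) (appList (close A') Ns) := by
    have : Rep Q (close A) (close A') := by
      unfold close
      rw [rep_fvBound hQ h]
      exact rep_absN h _
    exact rep_appList this Ns
  obtain ⟨B', h1, h2⟩ := rep_sim_star hQ hst hrep
  rw [rep_icomb h2] at h1
  exact ⟨Ns, hNs, bstar_bconv h1⟩
/-! ### WBO machinery -/

theorem wbo_cu {M N : Lam} (h : WBO M N) : ∀ k, ClosedUnder k M → ClosedUnder k N := by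
  induction h with
  | wbeta U V hc =>
      intro k _
      have h0 : ClosedUnder 0 (subst 0 V U) := by
        simp only [Closed, ClosedUnder] at hc
        exact subst_cu U 0 0 V (by omega) hc.1 hc.2
      exact cu_mono _ (by omega) h0
  | womega M hc hns hne => intro k _; exact cu_mono _ (by omega) omega_closed
  | appL N h ih =>
      intro k hc; simp only [ClosedUnder] at hc ⊢; exact ⟨ih k hc.1, hc.2⟩
  | appR M h ih =>
      intro k hc; simp only [ClosedUnder] at hc ⊢; exact ⟨hc.1, ih k hc.2⟩
  | lam h ih =>
      intro k hc; simp only [ClosedUnder] at hc ⊢; exact ih (k+1) hc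

theorem wbo_beta_or_rep {M N : Lam} (h : WBO M N) :
    Beta M N ∨ ∃ Q, Closed Q ∧ Rep Q N M := by
  induction h with
  | wbeta U V hc => exact Or.inl (Beta.beta U V)
  | womega M hc hns hne => exact Or.inr ⟨M, hc, Rep.omega⟩
  | appL N h ih =>
      rcases ih with hb | ⟨Q, hQ, hr⟩
      · exact Or.inl (Beta.appL N hb)
      · exact Or.inr ⟨Q, hQ, Rep.app hr (rep_refl Q N)⟩
  | appR M h ih =>
      rcases ih with hb | ⟨Q, hQ, hr⟩
      · exact Or.inl (Beta.appR M hb)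
      · exact Or.inr ⟨Q, hQ, Rep.app (rep_refl Q M) hr⟩
  | lam h ih =>
      rcases ih with hb | ⟨Q, hQ, hr⟩
      · exact Or.inl (Beta.lam hb)
      · exact Or.inr ⟨Q, hQ, Rep.lam hr⟩

/-- Solvability pulls back along a weak βΩ step. -/
theorem wbo_solv_back {M N : Lam} (h : WBO M N) (hs : Solvable N) : Solvable M := by
  rcases wbo_beta_or_rep h with hb | ⟨Q, hQ, hr⟩
  · exact beta_solv_back hb hs
  · exact rep_solv_back hQ hr hs

theorem wboStar_solv_back {M N : Lam} (h : WBOStar M N) (hs : Solvable N) : Solvable M := by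
  induction h with
  | refl => exact hs
  | tail h1 h2 ih => exact ih (wbo_solv_back h2 hs)

theorem wstar_appL {M M' : Lam} (N : Lam) (h : WBOStar M M') :
    WBOStar (app M N) (app M' N) :=
  Relation.ReflTransGen.lift (fun X => app X N) (fun _ _ hh => WBO.appL N hh) _ _ h

theorem wstar_appR (M : Lam) {N N' : Lam} (h : WBOStar N N') :
    WBOStar (app M N) (app M N') :=
  Relation.ReflTransGen.lift (fun X => app M X) (fun _ _ hh => WBO.appR M hh) _ _ h

theorem wstar_lam {M M' : Lam} (h : WBOStar M M') : WBOStar (lam M) (lam M') :=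
  Relation.ReflTransGen.lift (fun X => lam X) (fun _ _ hh => WBO.lam hh) _ _ h

theorem wstar_cu {M N : Lam} (h : WBOStar M N) (k : ℕ) (hc : ClosedUnder k M) :
    ClosedUnder k N := by
  induction h with
  | refl => exact hc
  | tail h1 h2 ih => exact wbo_cu h2 k ih

/-- Parallel weak βΩ-reduction. -/
inductive PW : Lam → Lam → Prop
  | var (n) : PW (var n) (var n)
  | app {M M' N N'} : PW M M' → PW N N' → PW (app M N) (app M' N')
  | lam {M M'} : PW M M' → PW (lam M) (lam M')
  | beta {U U' V V'} : Closed (app (lam U) V) → PW U U' → PW V V' →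
      PW (app (lam U) V) (subst 0 V' U')
  | omega {M} : Closed M → ¬ Solvable M → PW M Omega

theorem pw_refl : ∀ (M : Lam), PW M M
  | var n => PW.var n
  | app A B => PW.app (pw_refl A) (pw_refl B)
  | lam M => PW.lam (pw_refl M)

theorem wbo_pw {M N : Lam} (h : WBO M N) : PW M N := by
  induction h with
  | wbeta U V hc => exact PW.beta hc (pw_refl U) (pw_refl V)
  | womega M hc hns hne => exact PW.omega hc hns
  | appL N h ih => exact PW.app ih (pw_refl N)
  | appR M h ih => exact PW.app (pw_refl M) ih
  | lam h ih => exact PW.lam ih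

theorem pw_cu {M N : Lam} (h : PW M N) : ∀ k, ClosedUnder k M → ClosedUnder k N := by
  induction h with
  | var n => intro k hc; exact hc
  | app hA hB ihA ihB =>
      intro k hc; simp only [ClosedUnder] at hc ⊢; exact ⟨ihA k hc.1, ihB k hc.2⟩
  | lam hM ihM => intro k hc; simp only [ClosedUnder] at hc ⊢; exact ihM (k+1) hc
  | @beta U U' V V' hc hU hV ihU ihV =>
      intro k _
      simp only [Closed, ClosedUnder] at hc
      have h1 : ClosedUnder 1 U' := ihU 1 hc.1
      have h2 : ClosedUnder 0 V' := ihV 0 hc.2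
      exact cu_mono _ (by omega) (subst_cu U' 0 0 V' (by omega) h1 h2)
  | omega hc hns => intro k _; exact cu_mono _ (by omega) omega_closed

theorem pw_wstar {M N : Lam} (h : PW M N) : WBOStar M N := by
  induction h with
  | var n => exact Relation.ReflTransGen.refl
  | @app M M' N N' hA hB ihA ihB =>
      exact Relation.ReflTransGen.trans (wstar_appL N ihA) (wstar_appR M' ihB)
  | lam hM ihM => exact wstar_lam ihM
  | @beta U U' V V' hc hU hV ihU ihV =>
      have hsteps : WBOStar (app (lam U) V) (app (lam U') V') :=
        Relation.ReflTransGen.trans (wstar_appL V (wstar_lam ihU)) (wstar_appR (lam U') ihV)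
      refine Relation.ReflTransGen.tail hsteps (WBO.wbeta U' V' ?_)
      exact wstar_cu hsteps 0 hc
  | @omega M hc hns =>
      by_cases hM : M = Omega
      · subst hM; exact Relation.ReflTransGen.refl
      · exact Relation.ReflTransGen.single (WBO.womega M hc hns hM)

/-- Key lemma: parallel weak βΩ-reduction preserves unsolvability (pulls back solvability). -/
theorem pw_solv_back {M N : Lam} (h : PW M N) (hs : Solvable N) : Solvable M :=
  wboStar_solv_back (pw_wstar h) hs

theorem pw_lift {M N : Lam} (h : PW M N) : ∀ d, PW (lift d M) (lift d N) := by
  induction h with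
  | var n => intro d; exact pw_refl _
  | app hA hB ihA ihB => intro d; exact PW.app (ihA d) (ihB d)
  | lam hM ihM => intro d; exact PW.lam (ihM (d+1))
  | @beta U U' V V' hc hU hV ihU ihV =>
      intro d
      have hres : Closed (subst 0 V' U') := pw_cu (PW.beta hc hU hV) 0 hc
      rw [lift_closed_eq _ d (cu_mono _ (by omega) hc),
          lift_closed_eq _ d (cu_mono _ (by omega) hres)]
      exact PW.beta hc hU hV
  | @omega M hc hns =>
      intro d
      rw [lift_closed_eq _ d (cu_mono _ (by omega) hc),
          lift_closed_eq _ d (cu_mono _ (by omega) omega_closed)]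
      exact PW.omega hc hns

theorem pw_subst {M M' : Lam} (h : PW M M') :
    ∀ (k : ℕ) {N N' : Lam}, PW N N' → PW (subst k N M) (subst k N' M') := by
  induction h with
  | var n =>
      intro k N N' hN
      simp only [subst]
      split
      · exact hN
      · split <;> exact pw_refl _
  | app hA hB ihA ihB => intro k N N' hN; exact PW.app (ihA k hN) (ihB k hN)
  | lam hM ihM => intro k N N' hN; exact PW.lam (ihM (k+1) (pw_lift hN 0))
  | @beta U U' V V' hc hU hV ihU ihV =>
      intro k N N' hN
      have hres : Closed (subst 0 V' U') := pw_cu (PW.beta hc hU hV) 0 hc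
      rw [subst_closed_eq _ k N (cu_mono _ (by omega) hc),
          subst_closed_eq _ k N' (cu_mono _ (by omega) hres)]
      exact PW.beta hc hU hV
  | @omega M hc hns =>
      intro k N N' hN
      rw [subst_closed_eq _ k N (cu_mono _ (by omega) hc),
          subst_closed_eq _ k N' (cu_mono _ (by omega) omega_closed)]
      exact PW.omega hc hns

theorem app_unsolv {M N : Lam} (hM : Closed M) (hN : Closed N) (h : ¬ Solvable M) :
    ¬ Solvable (app M N) := by
  rintro ⟨Ns, hNs, hconv⟩
  have hc : Closed (app M N) := by
    simp only [Closed, ClosedUnder]; exact ⟨hM, hN⟩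
  rw [close_eq_self hc] at hconv
  refine h ⟨N :: Ns, ?_, ?_⟩
  · intro X hX
    rcases hX with _ | hX
    · exact hN
    · exact hNs X (by assumption)
  · rw [close_eq_self hM, ← appList_app]
    exact hconv
/-! ### Diamond property for parallel weak βΩ-reduction -/

theorem pw_lam_inv {X Y : Lam} (h : PW (lam X) Y) :
    (∃ Y', Y = lam Y' ∧ PW X Y') ∨ (Closed (lam X) ∧ ¬ Solvable (lam X) ∧ Y = Omega) := by
  cases h with
  | lam h => exact Or.inl ⟨_, rfl, h⟩
  | omega hc hns => exact Or.inr ⟨hc, hns, rfl⟩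

theorem pw_to_omega {M N : Lam} (h : PW M N) (hc : Closed M) (hns : ¬ Solvable M) :
    PW N Omega :=
  PW.omega (pw_cu h 0 hc) (fun hs => hns (pw_solv_back h hs))

theorem closed_app {A B : Lam} (hA : Closed A) (hB : Closed B) : Closed (app A B) := by
  simp only [Closed, ClosedUnder]; exact ⟨hA, hB⟩

theorem closed_app_inv {A B : Lam} (h : Closed (app A B)) : Closed A ∧ Closed B := by
  simpa only [Closed, ClosedUnder] using h

theorem pw_diamond : ∀ {M N₁ : Lam}, PW M N₁ → ∀ {N₂ : Lam}, PW M N₂ →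
    ∃ P, PW N₁ P ∧ PW N₂ P := by
  intro M N₁ h₁
  induction h₁ with
  | var n =>
      intro N₂ h₂
      cases h₂ with
      | var => exact ⟨var n, pw_refl _, pw_refl _⟩
      | omega hc hns => simp [Closed, ClosedUnder] at hc
  | @omega M hc hns =>
      intro N₂ h₂
      exact ⟨Omega, pw_refl _, pw_to_omega h₂ hc hns⟩
  | @lam A A₁ hA ihA =>
      intro N₂ h₂
      cases h₂ with
      | lam hA₂ =>
          obtain ⟨Q, hQ1, hQ2⟩ := ihA hA₂
          exact ⟨lam Q, PW.lam hQ1, PW.lam hQ2⟩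
      | omega hc hns =>
          exact ⟨Omega, pw_to_omega (PW.lam hA) hc hns, pw_refl _⟩
  | @app A A₁ B B₁ hA hB ihA ihB =>
      intro N₂ h₂
      cases h₂ with
      | app hA₂ hB₂ =>
          obtain ⟨P, hP1, hP2⟩ := ihA hA₂
          obtain ⟨Q, hQ1, hQ2⟩ := ihB hB₂
          exact ⟨app P Q, PW.app hP1 hQ1, PW.app hP2 hQ2⟩
      | omega hc hns =>
          exact ⟨Omega, pw_to_omega (PW.app hA hB) hc hns, pw_refl _⟩
      | @beta U U₂ V V₂ hc hU₂ hV₂ =>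
          -- here A = lam U, B = V
          obtain ⟨hcU, hcB⟩ := closed_app_inv hc
          rcases pw_lam_inv hA with ⟨U₁, rfl, hU₁⟩ | ⟨_, hnsU, rfl⟩
          · -- A₁ = lam U₁
            obtain ⟨Q, hQ1, hQ2⟩ := ihA (PW.lam hU₂)
            rcases pw_lam_inv hQ1 with ⟨W, rfl, hW1⟩ | ⟨hcU₁, hnsU₁, rfl⟩
            · -- Q = lam W
              have hW2 : PW U₂ W := by
                rcases pw_lam_inv hQ2 with ⟨W', hW', hPW⟩ | ⟨_, _, hbad⟩
                · cases hW'; exact hPW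
                · exact absurd hbad (by simp [Omega])
              obtain ⟨R, hR1, hR2⟩ := ihB hV₂
              refine ⟨subst 0 R W, PW.beta ?_ hW1 hR1, pw_subst hW2 0 hR2⟩
              exact closed_app (pw_cu hA 0 hcU) (pw_cu hB 0 hcB)
            · -- lam U₁ is closed unsolvable
              have hcB₁ : Closed B₁ := pw_cu hB 0 hcB
              have hcV₂ : Closed V₂ := pw_cu hV₂ 0 hcB
              have hnsU₂ : Closed (lam U₂) ∧ ¬ Solvable (lam U₂) := by
                cases hQ2 with
                | omega hc2 hns2 => exact ⟨hc2, hns2⟩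
              have hstep : PW (app (lam U₂) V₂) (subst 0 V₂ U₂) :=
                PW.beta (closed_app hnsU₂.1 hcV₂) (pw_refl U₂) (pw_refl V₂)
              refine ⟨Omega, ?_, ?_⟩
              · exact PW.omega (closed_app hcU₁ hcB₁) (app_unsolv hcU₁ hcB₁ hnsU₁)
              · exact PW.omega (pw_cu hstep 0 (closed_app hnsU₂.1 hcV₂))
                  (fun hs => app_unsolv hnsU₂.1 hcV₂ hnsU₂.2 (pw_solv_back hstep hs))
          · -- A₁ = Omega, lam U closed unsolvable
            have hcB₁ : Closed B₁ := pw_cu hB 0 hcB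
            have hMns : ¬ Solvable (app (lam U) B) := app_unsolv hcU hcB hnsU
            have hM₂ : PW (app (lam U) B) (subst 0 V₂ U₂) := PW.beta hc hU₂ hV₂
            refine ⟨Omega, ?_, ?_⟩
            · exact PW.omega (closed_app omega_closed hcB₁)
                (app_unsolv omega_closed hcB₁ omega_unsolvable)
            · exact pw_to_omega hM₂ hc hMns
  | @beta U U₁ V V₁ hc hU hV ihU ihV =>
      intro N₂ h₂
      obtain ⟨hcU, hcV⟩ := closed_app_inv hc
      cases h₂ with
      | @app _ A₂ _ B₂ hL hR =>
          rcases pw_lam_inv hL with ⟨U₂, rfl, hU₂⟩ | ⟨_, hnsU, rfl⟩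
          · obtain ⟨W, hW1, hW2⟩ := ihU hU₂
            obtain ⟨R, hR1, hR2⟩ := ihV hR
            exact ⟨subst 0 R W, pw_subst hW1 0 hR1,
              PW.beta (closed_app (pw_cu hL 0 hcU) (pw_cu hR 0 hcV)) hW2 hR2⟩
          · refine ⟨Omega, ?_, ?_⟩
            · exact pw_to_omega (PW.beta hc hU hV) hc (app_unsolv hcU hcV hnsU)
            · exact PW.omega (closed_app omega_closed (pw_cu hR 0 hcV))
                (app_unsolv omega_closed (pw_cu hR 0 hcV) omega_unsolvable)
      | beta hc₂ hU₂ hV₂ =>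
          obtain ⟨W, hW1, hW2⟩ := ihU hU₂
          obtain ⟨R, hR1, hR2⟩ := ihV hV₂
          exact ⟨subst 0 R W, pw_subst hW1 0 hR1, pw_subst hW2 0 hR2⟩
      | omega hc₂ hns =>
          exact ⟨Omega, pw_to_omega (PW.beta hc hU hV) hc₂ hns, pw_refl _⟩

theorem pwStar_wstar {M N : Lam} (h : Relation.ReflTransGen PW M N) : WBOStar M N :=
  Relation.ReflTransGen.trans_induction_on h (fun _ => Relation.ReflTransGen.refl)
    (fun hh => pw_wstar hh) (fun _ _ ih1 ih2 => ih1.trans ih2)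

/-- Weak βΩ-reduction is Church–Rosser. -/
theorem wbo_church_rosser (M N₁ N₂ : Lam) (h₁ : WBOStar M N₁) (h₂ : WBOStar M N₂) :
    ∃ P, WBOStar N₁ P ∧ WBOStar N₂ P := by
  have hp₁ : Relation.ReflTransGen PW M N₁ := Relation.ReflTransGen.mono (fun _ _ => wbo_pw) _ _ h₁
  have hp₂ : Relation.ReflTransGen PW M N₂ := Relation.ReflTransGen.mono (fun _ _ => wbo_pw) _ _ h₂
  obtain ⟨P, hP₁, hP₂⟩ := Relation.church_rosser
    (fun a b c hab hac => by
      obtain ⟨d, hbd, hcd⟩ := pw_diamond hab hac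
      exact ⟨d, Relation.ReflGen.single hbd, Relation.ReflTransGen.single hcd⟩)
    hp₁ hp₂
  exact ⟨P, pwStar_wstar hP₁, pwStar_wstar hP₂⟩

end Lam
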